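/- In characteristic 2, the point P_O = [0:0:0:1] is a singular point of the quartic Kummer surface q(k̄₁,k̄₂,k̄₃,k̄₄) = 0 in ℙ³: all four partial derivatives of q vanish at [0:0:0:1]. -/

import Mathlib

open MvPolynomial

set_option maxHeartbeats 1000000

/-- The quartic polynomial defining the Kummer surface in `ℙ³` in characteristic
two (paper Appendix, Subsection 7.4), in variables `k̄₁ = X 0`, `k̄₂ = X 1`,
`k̄₃ = X 2`, `k̄₄ = X 3`. -/
noncomputable def kummerQuartic {F : Type*} [CommRing F]
    (f₀ f₁ f₂ f₃ f₄ f₅ f₆ g₀ g₁ g₂ g₃ : F) : MvPolynomial (Fin 4) F :=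
  C (f₁^2 + f₂*g₀^2 + f₁*g₀*g₁ + f₀*g₁^2) * X 0 ^ 4
  + C (f₃*g₀^2 + f₁*g₀*g₂) * X 0 ^ 3 * X 1
  + C (f₄*g₀^2 + f₀*g₂^2 + f₁*g₀*g₃) * X 0 ^ 2 * X 1 ^ 2
  + C (f₅*g₀^2) * X 0 * X 1 ^ 3
  + C (f₆*g₀^2 + f₀*g₃^2) * X 1 ^ 4
  + C (f₃*g₀*g₁ + f₁*g₁*g₂ + f₁*g₀*g₃) * X 0 ^ 3 * X 2
  + C (f₅*g₀^2 + f₃*g₀*g₂) * X 0 ^ 2 * X 1 * X 2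
  + C (f₁*g₂^2 + f₁*g₁*g₃) * X 0 ^ 2 * X 1 * X 2
  + C (f₃*g₀*g₃) * X 0 * X 1 ^ 2 * X 2
  + C (f₁*g₃^2) * X 1 ^ 3 * X 2
  + C (f₃^2 + f₆*g₀^2 + f₅*g₀*g₁ + f₄*g₁^2) * X 0 ^ 2 * X 2 ^ 2
  + C (f₃*g₁*g₂ + f₂*g₂^2 + f₃*g₀*g₃ + f₁*g₂*g₃ + f₀*g₃^2) * X 0 ^ 2 * X 2 ^ 2
  + C (f₅*g₁^2 + f₅*g₀*g₂ + f₃*g₁*g₃ + f₁*g₃^2) * X 0 * X 1 * X 2 ^ 2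
  + C (f₆*g₁^2 + f₅*g₀*g₃ + f₂*g₃^2) * X 1 ^ 2 * X 2 ^ 2
  + C (f₅*g₁*g₂ + f₅*g₀*g₃ + f₃*g₂*g₃) * X 0 * X 2 ^ 3
  + C (f₅*g₁*g₃ + f₃*g₃^2) * X 1 * X 2 ^ 3
  + C (f₅^2 + f₆*g₂^2 + f₅*g₂*g₃ + f₄*g₃^2) * X 2 ^ 4
  + C (g₀^2) * X 0 ^ 3 * X 3
  + C (g₀*g₁) * X 0 ^ 2 * X 1 * X 3
  + C (g₀*g₂) * X 0 * X 1 ^ 2 * X 3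
  + C (g₀*g₃) * X 1 ^ 3 * X 3
  + C (g₁^2) * X 0 ^ 2 * X 2 * X 3
  + C (g₁*g₂ + g₀*g₃) * X 0 * X 1 * X 2 * X 3
  + C (g₁*g₃) * X 1 ^ 2 * X 2 * X 3
  + C (g₂^2) * X 0 * X 2 ^ 2 * X 3
  + C (g₂*g₃) * X 1 * X 2 ^ 2 * X 3
  + C (g₃^2) * X 2 ^ 3 * X 3
  + X 1 ^ 2 * X 3 ^ 2

/-! Every monomial of `q` has total degree four and degree at most two in `k̄₄`, so it is divisible
by two of `k̄₁, k̄₂, k̄₃`: `q ∈ 𝔪²` for the ideal `𝔪` of polynomials vanishing at `P_O`. By the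
Leibniz rule a derivation maps `𝔪²` into `𝔪`, so every partial derivative of `q` vanishes at `P_O`.
-/

theorem Derivation.map_mem_of_mem_sq {R A : Type*} [CommRing R] [CommRing A] [Algebra R A]
    (D : Derivation R A A) {I : Ideal A} {a : A} (ha : a ∈ I ^ 2) : D a ∈ I := by
  rw [sq] at ha
  refine Submodule.mul_induction_on ha (fun x hx y hy => ?_) (fun x y hx hy => ?_)
  · rw [D.leibniz, smul_eq_mul, smul_eq_mul]
    exact add_mem (I.mul_mem_right _ hx) (I.mul_mem_right _ hy)
  · rw [map_add]
    exact add_mem hx hy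

theorem kummerQuartic_mem_sq {F : Type*} [CommRing F] (f₀ f₁ f₂ f₃ f₄ f₅ f₆ g₀ g₁ g₂ g₃ : F)
    {I : Ideal (MvPolynomial (Fin 4) F)} (hX : ∀ i : Fin 4, i ≠ 3 → X i ∈ I) :
    kummerQuartic f₀ f₁ f₂ f₃ f₄ f₅ f₆ g₀ g₁ g₂ g₃ ∈ I ^ 2 := by
  unfold kummerQuartic
  simp only [pow_succ, pow_zero, one_mul, pow_two I, ← mul_assoc]
  repeat' apply add_mem
  -- each goal is a left-nested product `C c * X a * X b * ⋯` with two of `X 0, X 1, X 2`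
  all_goals
    repeat (first
      | exact hX _ (by decide)
      | exact I.mul_mem_left _ (hX _ (by decide))
      | refine Ideal.mul_mem_mul ?_ (hX _ (by decide))
      | apply Ideal.mul_mem_right)

theorem origin_singular_on_kummerQuartic_general
    {F : Type*} [Field F]
    (f₀ f₁ f₂ f₃ f₄ f₅ f₆ g₀ g₁ g₂ g₃ : F) :
    ∀ i : Fin 4,
      eval (fun j : Fin 4 => if j = 3 then (1 : F) else 0)
        (pderiv i (kummerQuartic f₀ f₁ f₂ f₃ f₄ f₅ f₆ g₀ g₁ g₂ g₃)) = 0 := by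
  intro i
  have hq : kummerQuartic f₀ f₁ f₂ f₃ f₄ f₅ f₆ g₀ g₁ g₂ g₃ ∈
      RingHom.ker (eval fun j : Fin 4 => if j = 3 then (1 : F) else 0) ^ 2 :=
    kummerQuartic_mem_sq _ _ _ _ _ _ _ _ _ _ _ fun j hj => by simp [hj]
  exact (pderiv i).map_mem_of_mem_sq hq

/-- in characteristic 2, the point `P_O = [0:0:0:1]` is a singular
point of the quartic Kummer surface `q = 0` in `ℙ³`: all four partial
derivatives of `q` vanish at `(0,0,0,1)`. -/
theorem origin_singular_on_kummerQuartic
    {F : Type*} [Field F] [CharP F 2]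
    (f₀ f₁ f₂ f₃ f₄ f₅ f₆ g₀ g₁ g₂ g₃ : F) :
    ∀ i : Fin 4,
      eval (fun j : Fin 4 => if j = 3 then (1 : F) else 0)
        (pderiv i (kummerQuartic f₀ f₁ f₂ f₃ f₄ f₅ f₆ g₀ g₁ g₂ g₃)) = 0 :=
  origin_singular_on_kummerQuartic_general f₀ f₁ f₂ f₃ f₄ f₅ f₆ g₀ g₁ g₂ g₃
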